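/- Let A_1, …, A_k and B_1, …, B_l be finite abelian groups, let φ : A_1 × ⋯ × A_k → ℝ/ℤ and ψ : B_1 × ⋯ × B_l → ℝ/ℤ be multilinear maps, and suppose φ factors through ψ. Then bias(φ) ≥ bias(ψ). -/

import Mathlib

open scoped ComplexOrder

/-- A map of (dependent) products of abelian groups is multiadditive (multilinear over ℤ)
if it is additive in each coordinate separately. -/
def IsMultiadditive {ι : Type} [DecidableEq ι] {A : ι → Type} [∀ i, AddCommGroup (A i)]
    {B : Type} [AddCommMonoid B] (φ : (∀ i, A i) → B) : Prop :=
  ∀ (i : ι) (x : ∀ j, A j) (a b : A i),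
    φ (Function.update x i (a + b)) = φ (Function.update x i a) + φ (Function.update x i b)

/-- The standard character `e(x) = exp(2πix)` of `ℝ/ℤ`. -/
noncomputable def eChar (x : AddCircle (1 : ℝ)) : ℂ := AddCircle.toCircle x

/-- The bias of a map `A_1 × ⋯ × A_k → ℝ/ℤ`. -/
noncomputable def bias {ι : Type} [Fintype ι] [DecidableEq ι] {A : ι → Type}
    [∀ i, Fintype (A i)] (φ : (∀ i, A i) → AddCircle (1 : ℝ)) : ℂ :=
  (∑ x : ∀ i, A i, eChar (φ x)) / (Fintype.card (∀ i, A i) : ℂ)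

/-- The bilinear map `m_q : ℤ/q × ℤ/q → ℝ/ℤ`, `(x, y) ↦ xy/q mod 1`. -/
noncomputable def mq (q : ℕ) (x y : ZMod q) : AddCircle (1 : ℝ) :=
  (((x.val * y.val : ℕ) : ℝ) / q : ℝ)

/-- A multilinear map `φ : A_1 × ⋯ × A_k → ℝ/ℤ` factors through `m_q` if
`φ(x) = m_q(φ₁(x_I), φ₂(x_{I^c}))` for some `I` with `0 < |I| < k` and multilinear `φ₁, φ₂`. -/
def FactorsThroughMq {ι : Type} [Fintype ι] [DecidableEq ι] {A : ι → Type}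
    [∀ i, AddCommGroup (A i)] (q : ℕ) (φ : (∀ i, A i) → AddCircle (1 : ℝ)) : Prop :=
  ∃ I : Finset ι, I.Nonempty ∧ I ≠ Finset.univ ∧
    ∃ (φ₁ : (∀ i : I, A i) → ZMod q) (φ₂ : (∀ i : (Iᶜ : Finset ι), A i) → ZMod q),
      IsMultiadditive φ₁ ∧ IsMultiadditive φ₂ ∧
      ∀ x : ∀ i, A i, φ x = mq q (φ₁ (fun i => x i)) (φ₂ (fun i => x i))

/-- `φ` factors through `ψ` if there is a partition `[k] = I_1 ∪ ⋯ ∪ I_l` into nonempty sets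
and multilinear maps `φ_j : ∏_{i ∈ I_j} A_i → B_j` with
`φ(x) = ψ(φ_1(x_{I_1}), …, φ_l(x_{I_l}))`. -/
def FactorsThrough' {k l : ℕ} {A : Fin k → Type} [∀ i, AddCommGroup (A i)]
    {B : Fin l → Type} [∀ j, AddCommGroup (B j)]
    (φ : (∀ i, A i) → AddCircle (1 : ℝ)) (ψ : (∀ j, B j) → AddCircle (1 : ℝ)) : Prop :=
  ∃ P : Fin l → Finset (Fin k),
    (∀ j, (P j).Nonempty) ∧
    (∀ j j', j ≠ j' → Disjoint (P j) (P j')) ∧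
    (∀ i : Fin k, ∃ j, i ∈ P j) ∧
    ∃ φj : ∀ j, (∀ i : P j, A i) → B j,
      (∀ j, IsMultiadditive (φj j)) ∧
      ∀ x : ∀ i, A i, φ x = ψ (fun j => φj j (fun i => x i))

/-! For an additive character `χ` of a finite abelian group, `𝔼 g, e(χ g)` is `1` if `χ = 0`
and `0` otherwise. Averaging over a single coordinate therefore shows `𝔼 x, e(μ x) ≥ 0` for
every multilinear `μ`, and consequently `𝔼 g, e(χ g) ≤ 𝔼 x, e(χ (μ x))` for every multilinear
`μ` with values in the group: substituting a multilinear map into one coordinate of a character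
can only raise its mean. Since fixing all coordinates of `ψ` but the `j`-th leaves a character,
the sets `I_j` can be substituted one at a time (a hybrid argument), moving from
`𝔼 b, e(ψ b) = bias ψ` to `𝔼 x, e(ψ(φ_1(x_{I_1}), …, φ_l(x_{I_l})))`, which is `bias φ` because
`x ↦ (x_{I_j})_j` is a bijection when the `I_j` partition the coordinates. -/

open Finset Function
open scoped BigOperators

theorem Fintype.expect_prod_type {α β M : Type*} [Fintype α] [Fintype β] [AddCommMonoid M]
    [Module ℚ≥0 M] (f : α × β → M) : 𝔼 p, f p = 𝔼 a, 𝔼 b, f (a, b) := by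
  rw [← univ_product_univ, expect_product]

theorem Fintype.expect_expect_update {ι : Type*} [Fintype ι] [DecidableEq ι] {X : ι → Type*}
    [∀ j, Fintype (X j)] {M : Type*} [AddCommMonoid M] [Module ℚ≥0 M] (i : ι)
    (f : (∀ j, X j) → M) : 𝔼 x, 𝔼 a, f (update x i a) = 𝔼 x, f x := by
  let swap : Equiv.Perm ((∀ j, X j) × X i) :=
    Involutive.toPerm (fun p => (update p.1 i p.2, p.1 i)) fun p => by
      simp only [update_idem, update_eq_self, update_self]
  calc 𝔼 x, 𝔼 a, f (update x i a) = 𝔼 p, f (swap p).1 := by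
        rw [Fintype.expect_prod_type]; rfl
    _ = 𝔼 p : (∀ j, X j) × X i, f p.1 := Fintype.expect_equiv swap _ _ fun _ => rfl
    _ = 𝔼 x, f x := by
      rw [Fintype.expect_prod_type]
      exact expect_congr rfl fun x _ => Finset.expect_const (univ_nonempty_iff.2 ⟨x i⟩) (f x)

theorem Fintype.expect_le_expect_of_forall_expect_update_le {ι : Type*} [Fintype ι]
    [DecidableEq ι] {X : ι → Type*} [∀ j, Fintype (X j)] {M : Type*} [AddCommMonoid M]
    [PartialOrder M] [IsOrderedAddMonoid M] [Module ℚ≥0 M] [PosSMulMono ℚ≥0 M] (i : ι)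
    {f g : (∀ j, X j) → M} (h : ∀ x, 𝔼 a, f (update x i a) ≤ 𝔼 a, g (update x i a)) :
    𝔼 x, f x ≤ 𝔼 x, g x := by
  rw [← expect_expect_update i f, ← expect_expect_update i g]
  exact expect_le_expect fun x _ => h x

theorem eChar_injective : Injective eChar :=
  Circle.coe_injective.comp (AddCircle.injective_toCircle one_ne_zero)

theorem eChar_zero : eChar 0 = 1 := by simp [eChar]

theorem AddMonoidHom.expect_eChar_eq_ite {G : Type*} [AddCommGroup G] [Fintype G]
    (χ : G →+ AddCircle (1 : ℝ)) [Decidable (χ = 0)] :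
    𝔼 g, eChar (χ g) = if χ = 0 then 1 else 0 := by
  set e : AddChar G ℂ :=
    (Circle.coeHom.compAddChar AddCircle.toCircle_addChar).compAddMonoidHom χ
  have he : ∀ g, e g = eChar (χ g) := fun _ => rfl
  have he_zero : e = 0 ↔ χ = 0 := by
    refine ⟨fun h => AddMonoidHom.ext fun g => eChar_injective ?_, fun h => ?_⟩
    · rw [← he, h, AddChar.zero_apply, AddMonoidHom.zero_apply, eChar_zero]
    · ext g; rw [he, h, AddMonoidHom.zero_apply, eChar_zero, AddChar.zero_apply]
  simp_rw [← he, expect_eq_sum_div_card, AddChar.sum_eq_ite, he_zero]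
  split_ifs <;> simp

theorem AddMonoidHom.expect_eChar_nonneg {G : Type*} [AddCommGroup G] [Fintype G]
    (χ : G →+ AddCircle (1 : ℝ)) : 0 ≤ 𝔼 g, eChar (χ g) := by
  classical
  rw [χ.expect_eChar_eq_ite]
  split_ifs <;> simp

section Multiadditive

variable {ι : Type} [Fintype ι] [DecidableEq ι] [Nonempty ι] {A : ι → Type}
  [∀ i, AddCommGroup (A i)] [∀ i, Fintype (A i)]

theorem IsMultiadditive.expect_eChar_nonneg {μ : (∀ i, A i) → AddCircle (1 : ℝ)}
    (hμ : IsMultiadditive μ) : 0 ≤ 𝔼 x, eChar (μ x) := by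
  obtain ⟨i⟩ := ‹Nonempty ι›
  rw [← Fintype.expect_expect_update i]
  exact expect_nonneg fun x _ =>
    (AddMonoidHom.mk' (fun a => μ (update x i a)) (hμ i x)).expect_eChar_nonneg

theorem IsMultiadditive.expect_eChar_le_expect_eChar_comp {G : Type} [AddCommGroup G]
    [Fintype G] {μ : (∀ i, A i) → G} (hμ : IsMultiadditive μ) (χ : G →+ AddCircle (1 : ℝ)) :
    𝔼 g, eChar (χ g) ≤ 𝔼 x, eChar (χ (μ x)) := by
  classical
  rw [χ.expect_eChar_eq_ite]
  split_ifs with hχ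
  · simp [hχ, eChar_zero]
  · refine IsMultiadditive.expect_eChar_nonneg fun i x a b => ?_
    rw [hμ i x a b, map_add]

end Multiadditive

section Hybrid

variable {ι : Type} [Fintype ι] [DecidableEq ι] {B : ι → Type} [∀ j, Fintype (B j)]
  {C : ι → Type*} [∀ j, Fintype (C j)]

noncomputable def hybridMean (ψ : (∀ j, B j) → AddCircle (1 : ℝ)) (μ : ∀ j, C j → B j)
    (s : Finset ι) : ℂ :=
  𝔼 w : ∀ j, C j × B j, eChar (ψ (s.piecewise (fun j => (w j).2) (fun j => μ j (w j).1)))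

theorem hybridMean_univ [∀ j, Nonempty (C j)] (ψ : (∀ j, B j) → AddCircle (1 : ℝ))
    (μ : ∀ j, C j → B j) : hybridMean ψ μ univ = 𝔼 b, eChar (ψ b) := by
  rw [hybridMean, Fintype.expect_equiv (Equiv.arrowProdEquivProdArrow ι C B) _
    (fun p => eChar (ψ p.2)) fun w => by rw [piecewise_univ]; rfl, Fintype.expect_prod_type]
  exact Fintype.expect_const (𝔼 b, eChar (ψ b))

theorem hybridMean_empty [∀ j, Nonempty (B j)] (ψ : (∀ j, B j) → AddCircle (1 : ℝ))
    (μ : ∀ j, C j → B j) :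
    hybridMean ψ μ ∅ = 𝔼 y : ∀ j, C j, eChar (ψ fun j => μ j (y j)) := by
  rw [hybridMean, Fintype.expect_equiv (Equiv.arrowProdEquivProdArrow ι C B) _
    (fun p => eChar (ψ fun j => μ j (p.1 j))) fun w => by rw [piecewise_empty]; rfl,
    Fintype.expect_prod_type]
  exact expect_congr rfl fun y _ => Fintype.expect_const (eChar (ψ fun j => μ j (y j)))

theorem hybridMean_insert_le [∀ j, AddCommGroup (B j)] {ψ : (∀ j, B j) → AddCircle (1 : ℝ)}
    (hψ : IsMultiadditive ψ) {μ : ∀ j, C j → B j}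
    (hμ : ∀ j (χ : B j →+ AddCircle (1 : ℝ)), 𝔼 b, eChar (χ b) ≤ 𝔼 c, eChar (χ (μ j c)))
    {s : Finset ι} {j : ι} (hj : j ∉ s) : hybridMean ψ μ (insert j s) ≤ hybridMean ψ μ s := by
  refine Fintype.expect_le_expect_of_forall_expect_update_le j fun w => ?_
  set c := s.piecewise (fun j => (w j).2) (fun j => μ j (w j).1)
  let χ : B j →+ AddCircle (1 : ℝ) := AddMonoidHom.mk' (fun β => ψ (update c j β)) (hψ j c)
  have h_s : ∀ a : C j × B j, s.piecewise (fun k => (update w j a k).2)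
      (fun k => μ k (update w j a k).1) = update c j (μ j a.1) := by
    intro a
    ext k
    rcases eq_or_ne k j with rfl | hk
    · simp [hj]
    · simp [hk, c, Finset.piecewise]
  have h_ins : ∀ a : C j × B j, (insert j s).piecewise (fun k => (update w j a k).2)
      (fun k => μ k (update w j a k).1) = update c j a.2 := by
    intro a
    rw [piecewise_insert, h_s, update_idem, update_self]
  simp only [h_ins, h_s]
  have : Nonempty (C j) := ⟨(w j).1⟩
  calc 𝔼 a : C j × B j, eChar (ψ (update c j a.2)) = 𝔼 β, eChar (χ β) := by
        rw [Fintype.expect_prod_type]; exact Fintype.expect_const (𝔼 β, eChar (χ β))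
    _ ≤ 𝔼 γ, eChar (χ (μ j γ)) := hμ j χ
    _ = 𝔼 a : C j × B j, eChar (ψ (update c j (μ j a.1))) := by
        rw [Fintype.expect_prod_type]
        exact expect_congr rfl fun γ _ => (Fintype.expect_const (eChar (χ (μ j γ)))).symm

theorem expect_eChar_le_expect_eChar_comp_pi [∀ j, AddCommGroup (B j)] [∀ j, Nonempty (C j)]
    {ψ : (∀ j, B j) → AddCircle (1 : ℝ)} (hψ : IsMultiadditive ψ) {μ : ∀ j, C j → B j}
    (hμ : ∀ j (χ : B j →+ AddCircle (1 : ℝ)), 𝔼 b, eChar (χ b) ≤ 𝔼 c, eChar (χ (μ j c))) :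
    𝔼 b, eChar (ψ b) ≤ 𝔼 y : ∀ j, C j, eChar (ψ fun j => μ j (y j)) := by
  rw [← hybridMean_univ ψ μ, ← hybridMean_empty]
  suffices ∀ s, hybridMean ψ μ s ≤ hybridMean ψ μ ∅ from this univ
  intro s
  induction s using Finset.induction_on with
  | empty => exact le_rfl
  | insert j s hj ih => exact (hybridMean_insert_le hψ hμ hj).trans ih

end Hybrid

theorem Finset.bijective_restrict_of_pairwise_disjoint {ι κ : Type*} {A : ι → Type*}
    {P : κ → Finset ι} (hdisj : Pairwise (Disjoint on P)) (hcover : ∀ i, ∃ j, i ∈ P j) :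
    Bijective fun (x : ∀ i, A i) j => (P j).restrict x := by
  choose part h_part using hcover
  refine ⟨fun x x' h => funext fun i => congr_fun (congr_fun h (part i)) ⟨i, h_part i⟩,
    fun y => ⟨fun i => y (part i) ⟨i, h_part i⟩, funext fun j => funext fun ⟨i, hi⟩ => ?_⟩⟩
  obtain rfl : part i = j := by_contra fun hne =>
    Finset.disjoint_left.mp (hdisj hne) (h_part i) hi
  rfl

theorem bias_eq_expect {ι : Type} [Fintype ι] [DecidableEq ι] {A : ι → Type}
    [∀ i, Fintype (A i)] (φ : (∀ i, A i) → AddCircle (1 : ℝ)) :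
    bias φ = 𝔼 x, eChar (φ x) := by
  rw [bias, expect_eq_sum_div_card, card_univ]

theorem bias_ge_of_factorsThrough_general (k l : ℕ) (A : Fin k → Type) [∀ i, AddCommGroup (A i)]
    [∀ i, Fintype (A i)] (B : Fin l → Type) [∀ j, AddCommGroup (B j)] [∀ j, Fintype (B j)]
    (φ : (∀ i, A i) → AddCircle (1 : ℝ)) (ψ : (∀ j, B j) → AddCircle (1 : ℝ))
    (hψ : IsMultiadditive ψ)
    (hfac : FactorsThrough' φ ψ) :
    bias ψ ≤ bias φ := by
  obtain ⟨P, hPne, hPdisj, hPcover, φj, hφj, hφ_eq⟩ := hfac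
  have : ∀ j, Nonempty (P j) := fun j => (hPne j).to_subtype
  have h_bij := Finset.bijective_restrict_of_pairwise_disjoint (A := A) hPdisj hPcover
  calc bias ψ = 𝔼 b, eChar (ψ b) := bias_eq_expect ψ
    _ ≤ 𝔼 y : ∀ j, ∀ i : P j, A i, eChar (ψ fun j => φj j (y j)) :=
        expect_eChar_le_expect_eChar_comp_pi hψ fun j =>
          (hφj j).expect_eChar_le_expect_eChar_comp
    _ = 𝔼 x, eChar (φ x) :=
        (Fintype.expect_bijective _ h_bij _ _ fun x => by rw [hφ_eq]; rfl).symm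
    _ = bias φ := (bias_eq_expect φ).symm

/-- If `φ : A_1 × ⋯ × A_k → ℝ/ℤ` and `ψ : B_1 × ⋯ × B_l → ℝ/ℤ` are multilinear and `φ` factors
through `ψ`, then `bias(φ) ≥ bias(ψ)`. -/
theorem bias_ge_of_factorsThrough (k l : ℕ) (A : Fin k → Type) [∀ i, AddCommGroup (A i)]
    [∀ i, Fintype (A i)] (B : Fin l → Type) [∀ j, AddCommGroup (B j)] [∀ j, Fintype (B j)]
    (φ : (∀ i, A i) → AddCircle (1 : ℝ)) (ψ : (∀ j, B j) → AddCircle (1 : ℝ))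
    (hφ : IsMultiadditive φ) (hψ : IsMultiadditive ψ)
    (hfac : FactorsThrough' φ ψ) :
    bias ψ ≤ bias φ :=
  bias_ge_of_factorsThrough_general k l A B φ ψ hψ hfac
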